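/- If F is an infinite field, the complex of vectors in general position F_gen(V)_* is exact: every cycle of words of vectors in general position (in any degree) is a boundary of a word of vectors in general position. -/

import Mathlib

/-- The boundary map of the (augmented) complex of words. -/
noncomputable def bdry (X : Type*) : (List X →₀ ℤ) →ₗ[ℤ] (List X →₀ ℤ) :=
  Finsupp.lsum ℤ fun w => LinearMap.toSpanSingleton ℤ _
    (∑ k ∈ Finset.range w.length, ((-1 : ℤ) ^ k) • Finsupp.single (w.eraseIdx k) 1)

/-- A word of vectors is in general position if every subfamily of at most
`dim V` of its entries is linearly independent. -/
def GenPosWord (F : Type*) {V : Type*} [Field F] [AddCommGroup V] [Module F V]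
    (w : List V) : Prop :=
  ∀ s : List V, s.Sublist w → ((s.length : ℕ) : Cardinal) ≤ Module.rank F V →
    LinearIndependent F fun i : Fin s.length => s.get i

private lemma bdry_single {X : Type*} (u : List X) (b : ℤ) :
    bdry X (Finsupp.single u b) =
      b • ∑ k ∈ Finset.range u.length, ((-1 : ℤ) ^ k) • Finsupp.single (u.eraseIdx k) 1 := by
  simp [bdry, Finsupp.sum_single_index]

private lemma bdry_cons_single {X : Type*} (v : X) (u : List X) (b : ℤ) :
    bdry X (Finsupp.single (v :: u) b) =
      Finsupp.single u b - Finsupp.mapDomain (List.cons v) (bdry X (Finsupp.single u b)) := by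
  rw [bdry_single, bdry_single]
  have h0 : (v :: u).length = u.length + 1 := rfl
  rw [h0, Finset.sum_range_succ']
  simp only [List.eraseIdx_cons_succ, List.eraseIdx_cons_zero, pow_succ, pow_zero, one_smul,
    Finsupp.mapDomain_smul, Finsupp.mapDomain_finset_sum, Finsupp.mapDomain_single,
    mul_neg_one, neg_smul, smul_add, smul_neg, Finsupp.smul_single, smul_eq_mul, mul_one,
    Finset.sum_neg_distrib]
  abel

private lemma bdry_mapDomain_cons {X : Type*} (v : X) (c : List X →₀ ℤ) :
    bdry X (Finsupp.mapDomain (List.cons v) c) =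
      c - Finsupp.mapDomain (List.cons v) (bdry X c) := by
  induction c using Finsupp.induction_linear with
  | zero => simp
  | add f g hf hg =>
      rw [Finsupp.mapDomain_add, map_add, hf, hg, map_add, Finsupp.mapDomain_add]; abel
  | single a b => rw [Finsupp.mapDomain_single]; exact bdry_cons_single v a b

private lemma genpos_cons {F V : Type*} [Field F] [AddCommGroup V] [Module F V]
    {v : V} {w : List V} (hw : GenPosWord F w)
    (hv : ∀ s : List V, s.Sublist w → (((s.length + 1 : ℕ)) : Cardinal) ≤ Module.rank F V →
      v ∉ Submodule.span F {x | x ∈ s}) : GenPosWord F (v :: w) := by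
  intro t ht hcard
  rcases List.sublist_cons_iff.mp ht with h | ⟨r, rfl, hr⟩
  · exact hw t h hcard
  · have hlen : (((r.length + 1 : ℕ)) : Cardinal) ≤ Module.rank F V := hcard
    have hr' : LinearIndependent F fun i : Fin r.length => r.get i :=
      hw r hr (le_trans (by exact_mod_cast Nat.cast_le.mpr (Nat.le_succ _)) hlen)
    have hv' := hv r hr hlen
    have heq : (fun i : Fin (v :: r).length => (v :: r).get i) =
        Fin.cons v (fun i : Fin r.length => r.get i) := by
      funext i
      refine Fin.cases ?_ ?_ i <;> simp
    rw [GenPosWord] at *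
    show LinearIndependent F fun i : Fin (v :: r).length => (v :: r).get i
    rw [heq]
    refine linearIndependent_fin_cons.mpr ⟨hr', ?_⟩
    rwa [show Set.range (fun i : Fin r.length => r.get i) = {x | x ∈ r} from by
      simp [Set.ext_iff, List.mem_iff_get]]

/-- Over an infinite field `F`, the augmented complex `F_gen(V)_*` of words of
vectors in general position is exact: every cycle (in any degree) is the
boundary of a chain of words of vectors in general position. -/
theorem genpos_vectors_exact (F V : Type*) [Field F] [Infinite F]
    [AddCommGroup V] [Module F V] (n : ℕ) (c : List V →₀ ℤ)
    (hlen : ∀ w ∈ c.support, w.length = n)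
    (hgp : ∀ w ∈ c.support, GenPosWord F w)
    (hcyc : bdry V c = 0) :
    ∃ b : List V →₀ ℤ,
      (∀ w ∈ b.support, w.length = n + 1 ∧ GenPosWord F w) ∧ bdry V b = c := by
  classical
  -- the finite set of "bad" subspaces that a generic vector must avoid
  set T : Finset (Submodule F V) :=
    c.support.biUnion (fun w =>
      (w.sublists.toFinset.filter
        (fun s => (((s.length + 1 : ℕ)) : Cardinal) ≤ Module.rank F V)).image
        (fun s => Submodule.span F {x | x ∈ s})) with hT
  have htop : ⊤ ∉ T := by
    intro htop
    rw [hT, Finset.mem_biUnion] at htop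
    obtain ⟨w, -, hw⟩ := htop
    rw [Finset.mem_image] at hw
    obtain ⟨s, hs, hspan⟩ := hw
    rw [Finset.mem_filter] at hs
    have hrank : Module.rank F V ≤ (s.length : Cardinal) := by
      have h1 : Module.rank F V = Module.rank F (Submodule.span F {x | x ∈ s}) := by
        rw [hspan]; exact (rank_top F V).symm
      have h2 : Module.rank F (Submodule.span F {x | x ∈ s}) ≤
          Cardinal.mk {x | x ∈ s} := rank_span_le _
      have h3 : Cardinal.mk {x | x ∈ s} ≤ (s.length : Cardinal) := by
        calc Cardinal.mk {x | x ∈ s}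
            = Cardinal.mk (↑s.toFinset : Set V) := by rw [List.coe_toFinset]
          _ = (s.toFinset.card : Cardinal) := Cardinal.mk_coe_finset
          _ ≤ (s.length : Cardinal) := by exact_mod_cast List.toFinset_card_le s
      exact h1 ▸ le_trans h2 h3
    have := le_trans hs.2 hrank
    have : s.length + 1 ≤ s.length := by exact_mod_cast this
    omega
  have hne := Subspace.biUnion_ne_univ_of_top_notMem (k := F) (E := V) htop
  have hex : ∃ v : V, ∀ p ∈ T, v ∉ p := by
    by_contra hc
    push_neg at hc
    apply hne
    ext x
    simp only [Set.mem_iUnion, Set.mem_univ, iff_true]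
    obtain ⟨p, hp, hxp⟩ := hc x
    exact ⟨p, hp, hxp⟩
  obtain ⟨v, hv⟩ := hex
  refine ⟨Finsupp.mapDomain (List.cons v) c, ?_, ?_⟩
  · intro w' hw'
    have := Finsupp.mapDomain_support hw'
    rw [Finset.mem_image] at this
    obtain ⟨w, hw, rfl⟩ := this
    constructor
    · simp [hlen w hw]
    · refine genpos_cons (hgp w hw) ?_
      intro s hs hcard
      refine hv _ ?_
      rw [hT, Finset.mem_biUnion]
      exact ⟨w, hw, Finset.mem_image.mpr ⟨s, Finset.mem_filter.mpr
        ⟨List.mem_toFinset.mpr (List.mem_sublists.mpr hs), hcard⟩, rfl⟩⟩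
  · rw [bdry_mapDomain_cons, hcyc, Finsupp.mapDomain_zero, sub_zero]
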